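/- arXiv:2008.00887 — 3 statements merged into one kernel-verified Lean document; each statement's English description precedes it below -/
import Mathlib

section
/- Let α ≠ 0 be an integer and φ solve the ODE ∂_y²φ − α²φ = f on the half line y ≥ 0 with φ(0) = 0 and φ decaying at infinity. Then there is a constant C independent of α such that α² ‖φ‖_∞ + |α| ‖∂_y φ‖_∞ + ‖∂_y² φ‖_∞ ≤ C ‖f‖_∞, where ‖·‖_∞ is the supremum norm on [0,∞). -/
/-!
With `k = a²`, the maximum principle bounds `k |φ|` by `M`: at a positive interior maximum
`z` of `φ` on `[0, ∞)` (attained since `φ(0) = 0` and `φ → 0`) one has `φ''(z) ≤ 0`, so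
`k φ(z) = φ''(z) - f(z) ≤ M`; apply this also to `-φ`. The equation then gives `|φ''| ≤ 2M`,
and the mean value theorem on `[y, y + 1/a]` interpolates `a |φ'(y)| ≤ 4M` between the two.
-/

open Filter Set Topology

theorem IsLocalMax.deriv_deriv_nonpos {f : ℝ → ℝ} {x : ℝ} (h : IsLocalMax f x)
    (hc : ContinuousAt f x) : deriv (deriv f) x ≤ 0 := by
  by_contra! hpos
  have hmin := isLocalMin_of_deriv_deriv_pos hpos h.deriv_eq_zero hc
  have hconst : f =ᶠ[𝓝 x] fun _ => f x :=
    (h.and hmin).mono fun y hy => le_antisymm hy.1 hy.2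
  rw [hconst.deriv.deriv_eq] at hpos
  simp at hpos

theorem exists_isMaxOn_Ici_of_tendsto_zero {φ : ℝ → ℝ} (hφ : Continuous φ)
    (hlim : Tendsto φ atTop (𝓝 0)) {a y : ℝ} (hy : a ≤ y) (hpos : 0 < φ y) :
    ∃ z, a ≤ z ∧ IsMaxOn φ (Ici a) z := by
  have hev : ∀ᶠ x in cocompact ℝ ⊓ 𝓟 (Ici a), φ x ≤ φ y := by
    rw [cocompact_eq_atBot_atTop, inf_sup_right, (disjoint_atBot_principal_Ici a).eq_bot,
      bot_sup_eq]
    exact (hlim.eventually (ge_mem_nhds hpos)).filter_mono inf_le_left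
  exact hφ.continuousOn.exists_isMaxOn' isClosed_Ici hy hev

theorem mul_abs_deriv_le_of_abs_le {g : ℝ → ℝ} (hg : Differentiable ℝ g)
    (hg' : Differentiable ℝ (deriv g)) {y h A B : ℝ} (hh : 0 < h)
    (hA : ∀ t ∈ Icc y (y + h), |g t| ≤ A)
    (hB : ∀ t ∈ Icc y (y + h), |deriv (deriv g) t| ≤ B) :
    h * |deriv g y| ≤ 2 * A + B * h ^ 2 := by
  have hy : y ∈ Icc y (y + h) := left_mem_Icc.2 (by linarith)
  have hyh : y + h ∈ Icc y (y + h) := right_mem_Icc.2 (by linarith)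
  obtain ⟨ξ, hξ, hslope⟩ := exists_deriv_eq_slope g (by linarith : y < y + h)
    hg.continuous.continuousOn hg.differentiableOn
  have hmean : h * deriv g ξ = g (y + h) - g y := by
    rw [hslope, add_sub_cancel_left]; field_simp
  have hlip : |deriv g ξ - deriv g y| ≤ B * h := by
    have := (convex_Icc y (y + h)).norm_image_sub_le_of_norm_deriv_le (fun x _ => hg' x) hB hy
      (Ioo_subset_Icc_self hξ)
    rw [Real.norm_eq_abs, Real.norm_eq_abs, abs_of_pos (sub_pos.2 hξ.1)] at this
    exact this.trans
      (mul_le_mul_of_nonneg_left (by linarith [hξ.2]) ((abs_nonneg _).trans (hB y hy)))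
  calc h * |deriv g y| ≤ h * |deriv g ξ| + h * |deriv g ξ - deriv g y| := by
        rw [← mul_add]; gcongr
        linarith [abs_sub_abs_le_abs_sub (deriv g y) (deriv g ξ),
          abs_sub_comm (deriv g y) (deriv g ξ)]
    _ = |g (y + h) - g y| + h * |deriv g ξ - deriv g y| := by
        rw [← hmean, abs_mul, abs_of_pos hh]
    _ ≤ (A + A) + h * (B * h) := by
        gcongr
        · exact (abs_sub _ _).trans (add_le_add (hA _ hyh) (hA _ hy))
    _ = 2 * A + B * h ^ 2 := by ring

section HalfLine

variable {k M : ℝ} {φ f : ℝ → ℝ}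

theorem mul_le_of_deriv_deriv_sub_mul_eq (hk : 0 < k) (hφ : ContDiff ℝ 2 φ)
    (hM : ∀ y, 0 ≤ y → |f y| ≤ M)
    (hode : ∀ y, 0 ≤ y → deriv (deriv φ) y - k * φ y = f y)
    (h0 : φ 0 = 0) (hlim : Tendsto φ atTop (𝓝 0)) {y : ℝ} (hy : 0 ≤ y) :
    k * φ y ≤ M := by
  rcases le_or_gt (φ y) 0 with hneg | hpos
  · nlinarith [(abs_nonneg _).trans (hM 0 le_rfl)]
  obtain ⟨z, hz, hmax⟩ := exists_isMaxOn_Ici_of_tendsto_zero hφ.continuous hlim hy hpos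
  have hyz : φ y ≤ φ z := hmax (mem_Ici.2 hy)
  have hz_pos : 0 < z := hz.lt_of_ne fun h => by rw [← h, h0] at hyz; linarith
  have hloc : IsLocalMax φ z := hmax.localize.isLocalMax (Ici_mem_nhds hz_pos)
  have hdd := hloc.deriv_deriv_nonpos hφ.continuous.continuousAt
  calc k * φ y ≤ k * φ z := mul_le_mul_of_nonneg_left hyz hk.le
    _ = deriv (deriv φ) z - f z := by linarith [hode z hz]
    _ ≤ M := by linarith [neg_abs_le (f z), hM z hz]

theorem mul_abs_le_of_deriv_deriv_sub_mul_eq (hk : 0 < k) (hφ : ContDiff ℝ 2 φ)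
    (hM : ∀ y, 0 ≤ y → |f y| ≤ M)
    (hode : ∀ y, 0 ≤ y → deriv (deriv φ) y - k * φ y = f y)
    (h0 : φ 0 = 0) (hlim : Tendsto φ atTop (𝓝 0)) {y : ℝ} (hy : 0 ≤ y) :
    k * |φ y| ≤ M := by
  have hneg : k * (-φ) y ≤ M := by
    refine mul_le_of_deriv_deriv_sub_mul_eq (f := -f) hk hφ.neg (fun t ht => ?_) (fun t ht => ?_)
      (by simp [h0]) (by simpa using hlim.neg) hy
    · simpa using hM t ht
    · simp only [deriv.fun_neg', mul_neg, sub_neg_eq_add, Pi.neg_apply]; linarith [hode t ht]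
  rw [Pi.neg_apply] at hneg
  rcases abs_cases (φ y) with ⟨h, _⟩ | ⟨h, _⟩ <;> rw [h]
  exacts [mul_le_of_deriv_deriv_sub_mul_eq hk hφ hM hode h0 hlim hy, by linarith]

theorem half_line_sup_estimate {a : ℝ} (ha : 0 < a) (hφ : ContDiff ℝ 2 φ)
    (hM : ∀ y, 0 ≤ y → |f y| ≤ M)
    (hode : ∀ y, 0 ≤ y → deriv (deriv φ) y - a ^ 2 * φ y = f y)
    (h0 : φ 0 = 0) (hlim : Tendsto φ atTop (𝓝 0)) {y : ℝ} (hy : 0 ≤ y) :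
    a ^ 2 * |φ y| + a * |deriv φ y| + |deriv (deriv φ) y| ≤ 7 * M := by
  have hφ_le : ∀ t, 0 ≤ t → a ^ 2 * |φ t| ≤ M := fun t ht =>
    mul_abs_le_of_deriv_deriv_sub_mul_eq (by positivity) hφ hM hode h0 hlim ht
  have hφ''_le : ∀ t, 0 ≤ t → |deriv (deriv φ) t| ≤ 2 * M := fun t ht => by
    have hsum : deriv (deriv φ) t = a ^ 2 * φ t + f t := by linarith [hode t ht]
    have := abs_add_le (a ^ 2 * φ t) (f t)
    rw [abs_mul, abs_sq, ← hsum] at this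
    linarith [hφ_le t ht, hM t ht]
  have hφ'_le : a⁻¹ * |deriv φ y| ≤ 2 * (M / a ^ 2) + 2 * M * a⁻¹ ^ 2 :=
    mul_abs_deriv_le_of_abs_le (hφ.differentiable two_ne_zero)
      ((hφ.iterate_deriv' 1 1).differentiable one_ne_zero) (inv_pos.2 ha)
      (fun t ht => (le_div_iff₀' (by positivity)).2 (hφ_le t (hy.trans ht.1)))
      (fun t ht => hφ''_le t (hy.trans ht.1))
  have hφ'_le' : a * |deriv φ y| ≤ 4 * M := by
    have := mul_le_mul_of_nonneg_left hφ'_le (sq_nonneg a)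
    field_simp at this
    linarith
  linarith [hφ_le y hy, hφ''_le y hy]

end HalfLine

/-- Elliptic estimate for `∂_y²φ - α²φ = f` on the half line with `φ(0) = 0` and decay
at infinity: there is a constant `C` independent of the integer `α ≠ 0` such that
`α² ‖φ‖_∞ + |α| ‖∂_y φ‖_∞ + ‖∂_y² φ‖_∞ ≤ C ‖f‖_∞` (stated pointwise on `[0,∞)`). -/
theorem laplace_half_line_sup_estimate :
    ∃ C : ℝ, 0 < C ∧ ∀ α : ℤ, α ≠ 0 → ∀ (φ f : ℝ → ℝ) (M : ℝ),
      ContDiff ℝ 2 φ → Continuous f →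
      (∀ y : ℝ, 0 ≤ y → |f y| ≤ M) →
      (∀ y : ℝ, 0 ≤ y → deriv (deriv φ) y - (α : ℝ) ^ 2 * φ y = f y) →
      φ 0 = 0 → Filter.Tendsto φ Filter.atTop (nhds 0) →
      ∀ y : ℝ, 0 ≤ y →
        (α : ℝ) ^ 2 * |φ y| + |(α : ℝ)| * |deriv φ y| + |deriv (deriv φ) y| ≤ C * M := by
  refine ⟨7, by norm_num, fun α hα φ f M hφ _ hM hode h0 hlim y hy => ?_⟩
  have ha : 0 < |(α : ℝ)| := abs_pos.2 (Int.cast_ne_zero.2 hα)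
  have hsq : (α : ℝ) ^ 2 = |(α : ℝ)| ^ 2 := (sq_abs _).symm
  rw [hsq]
  exact half_line_sup_estimate ha hφ hM (fun t ht => hsq ▸ hode t ht) h0 hlim hy
end

section
/- Let δ > 0, α an integer with δα² ≤ 1, and let φ solve ∂_y²φ − α²φ = f on y ≥ 0 with φ(0) = 0, where ‖f‖_{0,δ} = sup_y |f(y)|(δ^{-1}e^{-y/δ}+1)^{-1} < ∞. Then there is a constant C independent of α and δ such that |α|‖φ‖_∞ + ‖∂_y φ‖_∞ ≤ C‖f‖_{0,δ} and α²‖φ‖_∞ + ‖∂_y²φ‖_{0,δ} ≤ C‖f‖_{0,δ}. -/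
/-!
Put `a = |α|` and factor `∂² - a² = (∂ - a)(∂ + a)`. The function `ψ = φ' + a φ` solves
`ψ' = a ψ + f`. As `φ → 0` and `φ'' = a² φ + f` is bounded, `φ'` and hence `ψ` are bounded, which
singles out the decaying solution `ψ(y) = -∫_y^∞ e^{-a(t-y)} f(t) dt`; thus
`|ψ(y)| ≤ M (e^{-y/δ} + 1/a)`. Since `φ(0) = 0`, `φ(y) = ∫_0^y e^{-a(y-s)} ψ(s) ds`, whence
`|φ| ≤ M (δ + 1/a²) ≤ 2M/a²` by `δ a² ≤ 1`. The bounds on `φ'` and `φ''` then follow from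
`φ' = ψ - a φ` and `φ'' = a² φ + f`. Both integral formulas are replaced by comparison with explicit
antiderivatives of the majorants.
-/

open Real Set Filter Topology

lemma exists_abs_le_of_tendsto_atTop {f : ℝ → ℝ} {c : ℝ} (hf : Continuous f)
    (hlim : Tendsto f atTop (𝓝 c)) : ∃ K, ∀ t, 0 ≤ t → |f t| ≤ K := by
  obtain ⟨R, hR⟩ := eventually_atTop.1 (hlim.abs.eventually (gt_mem_nhds (lt_add_one |c|)))
  obtain ⟨K, hK⟩ := isCompact_Icc.exists_bound_of_continuousOn (hf.continuousOn (s := Icc 0 R))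
  refine ⟨max K (|c| + 1), fun t ht => ?_⟩
  rcases le_total t R with htR | hRt
  · exact (hK t ⟨ht, htR⟩).trans (le_max_left _ _)
  · exact (hR t hRt).le.trans (le_max_right _ _)

lemma abs_deriv_le_of_abs_le_of_abs_deriv_deriv_le {f : ℝ → ℝ} {K L : ℝ}
    (hf : Differentiable ℝ f) (hf' : Differentiable ℝ (deriv f))
    (hK : ∀ t, 0 ≤ t → |f t| ≤ K) (hL : ∀ t, 0 ≤ t → |deriv (deriv f) t| ≤ L)
    {t : ℝ} (ht : 0 ≤ t) : |deriv f t| ≤ 2 * K + L := by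
  obtain ⟨ξ, hξ, hslope⟩ := exists_deriv_eq_slope f (lt_add_one t) hf.continuous.continuousOn
    hf.differentiableOn
  have hξt : |deriv f ξ - deriv f t| ≤ L * (ξ - t) :=
    norm_image_sub_le_of_norm_deriv_le_segment' (f := deriv f)
      (fun s _ => (hf' s).hasDerivAt.hasDerivWithinAt) (fun s hs => hL s (ht.trans hs.1))
      ξ (Ioo_subset_Icc_self hξ)
  have hL0 : 0 ≤ L := (abs_nonneg _).trans (hL t ht)
  have hLξ : L * (ξ - t) ≤ L := by nlinarith [hξ.2]
  have hslope' : |deriv f ξ| ≤ 2 * K := by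
    rw [hslope, add_sub_cancel_left, div_one, two_mul]
    exact (abs_sub _ _).trans (add_le_add (hK _ (by linarith)) (hK t ht))
  linarith [abs_sub_abs_le_abs_sub (deriv f t) (deriv f ξ), abs_sub_comm (deriv f t) (deriv f ξ)]

lemma abs_sub_le_sub_of_abs_deriv_le_deriv {u u' G G' : ℝ → ℝ} {a b : ℝ} (hab : a ≤ b)
    (hu : ∀ t ∈ Icc a b, HasDerivAt u (u' t) t) (hG : ∀ t, HasDerivAt G (G' t) t)
    (hle : ∀ t ∈ Ico a b, |u' t| ≤ G' t) : |u b - u a| ≤ G b - G a :=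
  image_norm_le_of_norm_deriv_right_le_deriv_boundary (f := fun t => u t - u a)
    (B := fun t => G t - G a) (fun t ht => ((hu t ht).sub_const _).continuousAt.continuousWithinAt)
    (fun t ht => ((hu t (Ico_subset_Icc_self ht)).sub_const _).hasDerivWithinAt) (by simp)
    (fun t => (hG t).sub_const _) hle ⟨hab, le_rfl⟩

lemma abs_le_neg_of_abs_deriv_le_deriv {u u' G G' : ℝ → ℝ} {a : ℝ}
    (hu : ∀ t, a ≤ t → HasDerivAt u (u' t) t) (hG : ∀ t, HasDerivAt G (G' t) t)
    (hle : ∀ t, a ≤ t → |u' t| ≤ G' t) (hu0 : Tendsto u atTop (𝓝 0))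
    (hG0 : Tendsto G atTop (𝓝 0)) : |u a| ≤ -G a := by
  have hlim : Tendsto (fun Y => |u Y| + (G Y - G a)) atTop (𝓝 (-G a)) := by
    simpa using hu0.abs.add (hG0.sub_const (G a))
  refine ge_of_tendsto hlim ((eventually_ge_atTop a).mono fun Y hY => ?_)
  have := abs_sub_le_sub_of_abs_deriv_le_deriv hY (fun t ht => hu t ht.1) hG
    (fun t ht => hle t ht.1)
  linarith [abs_sub_abs_le_abs_sub (u a) (u Y), abs_sub_comm (u a) (u Y)]

lemma hasDerivAt_exp_mul (c t : ℝ) : HasDerivAt (fun s => exp (c * s)) (c * exp (c * t)) t := by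
  simpa [mul_comm] using ((hasDerivAt_id t).const_mul c).exp

lemma tendsto_exp_neg_mul_atTop {c : ℝ} (hc : 0 < c) :
    Tendsto (fun t => exp (-c * t)) atTop (𝓝 0) :=
  tendsto_exp_atBot.comp (tendsto_id.const_mul_atTop_of_neg (neg_neg_iff_pos.2 hc))

lemma exp_neg_div_eq_exp_neg_inv_mul (t δ : ℝ) : exp (-t / δ) = exp (-δ⁻¹ * t) := by
  rw [neg_div, div_eq_inv_mul, neg_mul]

lemma exp_neg_div_le_one {t δ : ℝ} (ht : 0 ≤ t) (hδ : 0 < δ) : exp (-t / δ) ≤ 1 :=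
  exp_le_one_iff.2 (div_nonpos_of_nonpos_of_nonneg (neg_nonpos.2 ht) hδ.le)

section FirstOrder

variable {a δ M : ℝ}

lemma nonneg_of_abs_le_mul_weight {f : ℝ → ℝ} (hδ : 0 < δ)
    (hf : ∀ t, 0 ≤ t → |f t| ≤ M * (δ⁻¹ * exp (-t / δ) + 1)) : 0 ≤ M :=
  nonneg_of_mul_nonneg_left ((abs_nonneg _).trans (hf 0 le_rfl)) (by positivity)

lemma abs_le_of_hasDerivAt_eq_mul_add {ψ h : ℝ → ℝ} (ha : 0 < a) (hδ : 0 < δ)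
    (hψ : ∀ t, 0 ≤ t → HasDerivAt ψ (a * ψ t + h t) t) (hbdd : ∃ B, ∀ t, 0 ≤ t → |ψ t| ≤ B)
    (hh : ∀ t, 0 ≤ t → |h t| ≤ M * (δ⁻¹ * exp (-t / δ) + 1)) {y : ℝ} (hy : 0 ≤ y) :
    |ψ y| ≤ M * (exp (-y / δ) + a⁻¹) := by
  have hM := nonneg_of_abs_le_mul_weight hδ hh
  obtain ⟨B, hB⟩ := hbdd
  have hu : ∀ t, y ≤ t → HasDerivAt (fun t => exp (-a * t) * ψ t) (exp (-a * t) * h t) t :=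
    fun t ht => ((hasDerivAt_exp_mul (-a) t).mul (hψ t (hy.trans ht))).congr_deriv (by ring)
  -- the antiderivative of the majorant `e^{-at} M (δ⁻¹ e^{-t/δ} + 1)` that vanishes at `∞`
  have hG : ∀ t, HasDerivAt (fun t => -M * exp (-a * t) * (exp (-δ⁻¹ * t) / (a * δ + 1) + a⁻¹))
      (M * exp (-a * t) * (δ⁻¹ * exp (-t / δ) + 1)) t := by
    intro t
    refine (((hasDerivAt_exp_mul (-a) t).const_mul (-M)).mul
      (((hasDerivAt_exp_mul (-δ⁻¹) t).div_const (a * δ + 1)).add_const a⁻¹)).congr_deriv ?_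
    rw [exp_neg_div_eq_exp_neg_inv_mul]
    field_simp
    ring
  have hle : ∀ t, y ≤ t → |exp (-a * t) * h t| ≤ M * exp (-a * t) * (δ⁻¹ * exp (-t / δ) + 1) := by
    intro t ht
    rw [abs_mul, abs_of_pos (exp_pos _), mul_comm M, mul_assoc]
    exact mul_le_mul_of_nonneg_left (hh t (hy.trans ht)) (exp_pos _).le
  have hu0 : Tendsto (fun t => exp (-a * t) * ψ t) atTop (𝓝 0) :=
    (tendsto_exp_neg_mul_atTop ha).zero_mul_isBoundedUnder_le
      (isBoundedUnder_of_eventually_le ((eventually_ge_atTop 0).mono fun t ht => hB t ht))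
  have hG0 : Tendsto (fun t => -M * exp (-a * t) * (exp (-δ⁻¹ * t) / (a * δ + 1) + a⁻¹))
      atTop (𝓝 0) := by
    simpa using ((tendsto_exp_neg_mul_atTop ha).const_mul (-M)).mul
      (((tendsto_exp_neg_mul_atTop (inv_pos.2 hδ)).div_const (a * δ + 1)).add_const a⁻¹)
  have key := abs_le_neg_of_abs_deriv_le_deriv hu hG hle hu0 hG0
  rw [abs_mul, abs_of_pos (exp_pos _), ← exp_neg_div_eq_exp_neg_inv_mul] at key
  have hdiv : exp (-y / δ) / (a * δ + 1) ≤ exp (-y / δ) :=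
    div_le_self (exp_pos _).le (by nlinarith)
  refine le_of_mul_le_mul_left (key.trans ?_) (exp_pos (-a * y))
  nlinarith [mul_le_mul_of_nonneg_left hdiv (mul_nonneg hM (exp_pos (-a * y)).le)]

lemma abs_le_of_abs_deriv_add_mul_le {φ : ℝ → ℝ} (ha : 0 < a) (hδ : 0 < δ)
    (hφ : Differentiable ℝ φ) (hφ0 : φ 0 = 0)
    (hψ : ∀ t, 0 ≤ t → |deriv φ t + a * φ t| ≤ M * (exp (-t / δ) + a⁻¹)) {y : ℝ} (hy : 0 ≤ y) :
    |φ y| ≤ M * (δ + a⁻¹ ^ 2) := by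
  have hM : 0 ≤ M := nonneg_of_mul_nonneg_left ((abs_nonneg _).trans (hψ 0 le_rfl)) (by positivity)
  have hv : ∀ t ∈ Icc 0 y, HasDerivAt (fun t => exp (a * t) * φ t)
      (exp (a * t) * (deriv φ t + a * φ t)) t := fun t _ =>
    ((hasDerivAt_exp_mul a t).mul (hφ t).hasDerivAt).congr_deriv (by ring)
  -- on `[0, y]` the factor `e^{a t}` in front of `e^{-t/δ}` is majorized by `e^{a y}`
  have hG : ∀ t, HasDerivAt
      (fun t => M * (a⁻¹ ^ 2 * exp (a * t) - δ * exp (a * y) * exp (-δ⁻¹ * t)))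
      (M * (a⁻¹ * exp (a * t) + exp (a * y) * exp (-t / δ))) t := by
    intro t
    refine ((((hasDerivAt_exp_mul a t).const_mul (a⁻¹ ^ 2)).sub
      ((hasDerivAt_exp_mul (-δ⁻¹) t).const_mul (δ * exp (a * y)))).const_mul M).congr_deriv ?_
    rw [exp_neg_div_eq_exp_neg_inv_mul]
    field_simp
    ring
  have hle : ∀ t ∈ Ico 0 y, |exp (a * t) * (deriv φ t + a * φ t)|
      ≤ M * (a⁻¹ * exp (a * t) + exp (a * y) * exp (-t / δ)) := by
    rintro t ⟨ht0, hty⟩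
    have hexp_le : exp (a * t) ≤ exp (a * y) := exp_le_exp.2 (by nlinarith)
    rw [abs_mul, abs_of_pos (exp_pos _)]
    calc exp (a * t) * |deriv φ t + a * φ t| ≤ exp (a * t) * (M * (exp (-t / δ) + a⁻¹)) :=
          mul_le_mul_of_nonneg_left (hψ t ht0) (exp_pos _).le
      _ ≤ M * (a⁻¹ * exp (a * t) + exp (a * y) * exp (-t / δ)) := by
          nlinarith [mul_le_mul_of_nonneg_right hexp_le (mul_nonneg hM (exp_pos (-t / δ)).le)]
  have key := abs_sub_le_sub_of_abs_deriv_le_deriv hy hv hG hle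
  simp only [hφ0, mul_zero, sub_zero, abs_mul, abs_of_pos (exp_pos _),
    ← exp_neg_div_eq_exp_neg_inv_mul, exp_zero] at key
  refine le_of_mul_le_mul_left (key.trans ?_) (exp_pos (a * y))
  have hrest : 0 ≤ δ * exp (a * y) * exp (-y / δ) + a⁻¹ ^ 2 := by positivity
  nlinarith [mul_nonneg hM hrest]

end FirstOrder

section SecondOrder

variable {a δ M : ℝ} {φ f : ℝ → ℝ}

lemma abs_deriv_add_mul_le_of_deriv_deriv_sub_sq_mul_eq (ha : 0 < a) (hδ : 0 < δ)
    (hφ : ContDiff ℝ 2 φ)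
    (hf : ∀ t, 0 ≤ t → |f t| ≤ M * (δ⁻¹ * exp (-t / δ) + 1))
    (hode : ∀ t, 0 ≤ t → deriv (deriv φ) t - a ^ 2 * φ t = f t)
    (hlim : Tendsto φ atTop (𝓝 0)) {y : ℝ} (hy : 0 ≤ y) :
    |deriv φ y + a * φ y| ≤ M * (exp (-y / δ) + a⁻¹) := by
  have hM := nonneg_of_abs_le_mul_weight hδ hf
  have hφ1 : Differentiable ℝ φ := hφ.differentiable (by norm_num)
  have hφ2 : Differentiable ℝ (deriv φ) :=
    (contDiff_succ_iff_deriv.mp hφ).2.2.differentiable one_ne_zero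
  obtain ⟨K, hK⟩ := exists_abs_le_of_tendsto_atTop hφ1.continuous hlim
  have hL : ∀ t, 0 ≤ t → |deriv (deriv φ) t| ≤ a ^ 2 * K + M * (δ⁻¹ + 1) := by
    intro t ht
    have hexp := exp_neg_div_le_one ht hδ
    rw [show deriv (deriv φ) t = a ^ 2 * φ t + f t by linarith [hode t ht]]
    refine (abs_add_le _ _).trans (add_le_add ?_ ((hf t ht).trans ?_))
    · rw [abs_mul, abs_of_nonneg (sq_nonneg a)]
      exact mul_le_mul_of_nonneg_left (hK t ht) (sq_nonneg a)
    · gcongr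
      exact mul_le_of_le_one_right (inv_pos.2 hδ).le hexp
  have hψ : ∀ t, 0 ≤ t → HasDerivAt (fun t => deriv φ t + a * φ t)
      (a * (deriv φ t + a * φ t) + f t) t := fun t ht =>
    ((hφ2 t).hasDerivAt.add ((hφ1 t).hasDerivAt.const_mul a)).congr_deriv
      (by rw [← hode t ht]; ring)
  refine abs_le_of_hasDerivAt_eq_mul_add ha hδ hψ ⟨2 * K + (a ^ 2 * K + M * (δ⁻¹ + 1)) + a * K,
    fun t ht => ?_⟩ hf hy
  have hφ' := abs_deriv_le_of_abs_le_of_abs_deriv_deriv_le hφ1 hφ2 hK hL ht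
  calc |deriv φ t + a * φ t| ≤ |deriv φ t| + |a * φ t| := abs_add_le _ _
    _ = |deriv φ t| + a * |φ t| := by rw [abs_mul, abs_of_pos ha]
    _ ≤ 2 * K + (a ^ 2 * K + M * (δ⁻¹ + 1)) + a * K :=
        add_le_add hφ' (mul_le_mul_of_nonneg_left (hK t ht) ha.le)

lemma sq_mul_abs_le_of_deriv_deriv_sub_sq_mul_eq (ha : 0 < a) (hδ : 0 < δ)
    (hδa : δ * a ^ 2 ≤ 1) (hφ : ContDiff ℝ 2 φ)
    (hf : ∀ t, 0 ≤ t → |f t| ≤ M * (δ⁻¹ * exp (-t / δ) + 1))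
    (hode : ∀ t, 0 ≤ t → deriv (deriv φ) t - a ^ 2 * φ t = f t) (hφ0 : φ 0 = 0)
    (hlim : Tendsto φ atTop (𝓝 0)) {y : ℝ} (hy : 0 ≤ y) :
    a ^ 2 * |φ y| ≤ 2 * M := by
  have hM := nonneg_of_abs_le_mul_weight hδ hf
  have hφy := abs_le_of_abs_deriv_add_mul_le ha hδ (hφ.differentiable (by norm_num)) hφ0
    (fun t ht => abs_deriv_add_mul_le_of_deriv_deriv_sub_sq_mul_eq ha hδ hφ hf hode hlim ht) hy
  calc a ^ 2 * |φ y| ≤ a ^ 2 * (M * (δ + a⁻¹ ^ 2)) := by gcongr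
    _ = M * (δ * a ^ 2 + 1) := by field_simp
    _ ≤ 2 * M := by nlinarith

lemma mul_abs_add_abs_deriv_le_of_deriv_deriv_sub_sq_mul_eq (ha : 1 ≤ a) (hδ : 0 < δ)
    (hδa : δ * a ^ 2 ≤ 1) (hφ : ContDiff ℝ 2 φ)
    (hf : ∀ t, 0 ≤ t → |f t| ≤ M * (δ⁻¹ * exp (-t / δ) + 1))
    (hode : ∀ t, 0 ≤ t → deriv (deriv φ) t - a ^ 2 * φ t = f t) (hφ0 : φ 0 = 0)
    (hlim : Tendsto φ atTop (𝓝 0)) {y : ℝ} (hy : 0 ≤ y) :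
    a * |φ y| + |deriv φ y| ≤ 6 * M := by
  have ha0 : 0 < a := by linarith
  have hφy := sq_mul_abs_le_of_deriv_deriv_sub_sq_mul_eq ha0 hδ hδa hφ hf hode hφ0 hlim hy
  have haφy : a * |φ y| ≤ 2 * M :=
    (mul_le_mul_of_nonneg_right (by nlinarith) (abs_nonneg (φ y))).trans hφy
  have hψy : |deriv φ y + a * φ y| ≤ 2 * M := by
    have hM := nonneg_of_abs_le_mul_weight hδ hf
    have hexp := exp_neg_div_le_one hy hδ
    have hinv : a⁻¹ ≤ 1 := inv_le_one_of_one_le₀ ha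
    refine (abs_deriv_add_mul_le_of_deriv_deriv_sub_sq_mul_eq ha0 hδ hφ hf hode hlim hy).trans ?_
    nlinarith
  have hφ'y := abs_sub (deriv φ y + a * φ y) (a * φ y)
  rw [add_sub_cancel_right, abs_mul, abs_of_pos ha0] at hφ'y
  linarith

lemma sq_mul_abs_add_abs_deriv_deriv_mul_inv_le_of_deriv_deriv_sub_sq_mul_eq (ha : 0 < a)
    (hδ : 0 < δ) (hδa : δ * a ^ 2 ≤ 1) (hφ : ContDiff ℝ 2 φ)
    (hf : ∀ t, 0 ≤ t → |f t| ≤ M * (δ⁻¹ * exp (-t / δ) + 1))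
    (hode : ∀ t, 0 ≤ t → deriv (deriv φ) t - a ^ 2 * φ t = f t) (hφ0 : φ 0 = 0)
    (hlim : Tendsto φ atTop (𝓝 0)) {y : ℝ} (hy : 0 ≤ y) :
    a ^ 2 * |φ y| + |deriv (deriv φ) y| * (δ⁻¹ * exp (-y / δ) + 1)⁻¹ ≤ 5 * M := by
  have hφy := sq_mul_abs_le_of_deriv_deriv_sub_sq_mul_eq ha hδ hδa hφ hf hode hφ0 hlim hy
  have hφ''y : |deriv (deriv φ) y| ≤ 2 * M + M * (δ⁻¹ * exp (-y / δ) + 1) := by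
    rw [show deriv (deriv φ) y = a ^ 2 * φ y + f y by linarith [hode y hy]]
    refine (abs_add_le _ _).trans (add_le_add ?_ (hf y hy))
    rwa [abs_mul, abs_of_nonneg (sq_nonneg a)]
  have hM := nonneg_of_abs_le_mul_weight hδ hf
  set w := δ⁻¹ * exp (-y / δ) + 1
  have hw : 1 ≤ w := le_add_of_nonneg_left (by positivity)
  have hφ''y_weighted : |deriv (deriv φ) y| * w⁻¹ ≤ 3 * M :=
    calc |deriv (deriv φ) y| * w⁻¹ ≤ (2 * M + M * w) * w⁻¹ := by gcongr
      _ = 2 * M * w⁻¹ + M := by field_simp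
      _ ≤ 3 * M := by nlinarith [inv_le_one_of_one_le₀ hw]
  linarith

end SecondOrder

/-- Boundary layer elliptic estimate: if `δ > 0`, `δα² ≤ 1`, and `φ` solves
`∂_y²φ - α²φ = f` on `y ≥ 0` with `φ(0) = 0`, decay at infinity, and
`|f(y)| ≤ M (δ⁻¹ e^{-y/δ} + 1)` (i.e. `‖f‖_{0,δ} ≤ M`), then with a constant `C`
independent of `α` and `δ`:
`|α| ‖φ‖_∞ + ‖∂_y φ‖_∞ ≤ C M` and `α² ‖φ‖_∞ + ‖∂_y² φ‖_{0,δ} ≤ C M`. -/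
theorem laplace_half_line_boundary_layer_estimate :
    ∃ C : ℝ, 0 < C ∧ ∀ δ : ℝ, 0 < δ → ∀ α : ℤ, α ≠ 0 → δ * (α : ℝ) ^ 2 ≤ 1 →
      ∀ (φ f : ℝ → ℝ) (M : ℝ),
      ContDiff ℝ 2 φ → Continuous f →
      (∀ y : ℝ, 0 ≤ y → |f y| ≤ M * (δ⁻¹ * Real.exp (-y / δ) + 1)) →
      (∀ y : ℝ, 0 ≤ y → deriv (deriv φ) y - (α : ℝ) ^ 2 * φ y = f y) →
      φ 0 = 0 → Filter.Tendsto φ Filter.atTop (nhds 0) →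
      ∀ y : ℝ, 0 ≤ y →
        |(α : ℝ)| * |φ y| + |deriv φ y| ≤ C * M ∧
        (α : ℝ) ^ 2 * |φ y| +
          |deriv (deriv φ) y| * (δ⁻¹ * Real.exp (-y / δ) + 1)⁻¹ ≤ C * M := by
  refine ⟨6, by norm_num, fun δ hδ α hα hδα φ f M hφ _ hf hode hφ0 hlim y hy => ?_⟩
  have ha : (1 : ℝ) ≤ |(α : ℝ)| := by rw [← Int.cast_abs]; exact_mod_cast Int.one_le_abs hα
  have hM := nonneg_of_abs_le_mul_weight hδ hf
  rw [← sq_abs] at hδα hode ⊢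
  exact ⟨mul_abs_add_abs_deriv_le_of_deriv_deriv_sub_sq_mul_eq ha hδ hδα hφ hf hode hφ0 hlim hy,
    (sq_mul_abs_add_abs_deriv_deriv_mul_inv_le_of_deriv_deriv_sub_sq_mul_eq (by positivity) hδ hδα
      hφ hf hode hφ0 hlim hy).trans (by linarith)⟩
end

section
/- Suppose nonnegative functions G^n(z₁,z₂), n ≥ 1, defined for small z₁,z₂ ≥ 0, satisfy G^n ≤ (C₀/n) Σ_{j=1}^{n−1} (G^j ∂_{z₁} G^{n−j} + G^j ∂_{z₂} G^{n−j}) for n ≥ 2, with all partial derivatives nonnegative. Then the partial sums G_N(τ,z₁,z₂) = Σ_{n=1}^N G^n(z₁,z₂) τ^{n−1} satisfy, for all τ, z₁, z₂ ≥ 0 and all N ≥ 1, the two-dimensional Hopf differential inequality ∂_τ G_N ≤ C G_N ∂_{z₁} G_N + C G_N ∂_{z₂} G_N for some constant C depending only on C₀. -/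
/-!
Put `D = ∂_{z₁}G + ∂_{z₂}G`; this reduces the claim to a one-dimensional Hopf inequality with
`C = C₀`. Differentiating `τ^{n-1}` produces a factor `n - 1 ≤ n`, which the `1/n` of the
recursion absorbs, and `τ^{n-2} = τ^{j-1} τ^{n-j-1}` turns the recursion into a truncated Cauchy
product of the coefficients of `G_N` and `D_N`. Its terms are nonnegative and indexed by a subset
of `[1, N]²`, so it is dominated by the full product `G_N D_N`.
-/

open Finset

theorem sum_Icc_sum_Ico_mul_sub_le_mul_sum {R : Type*} [Semiring R] [PartialOrder R]
    [IsOrderedRing R] {g h : ℕ → R} (hg : ∀ n, 0 ≤ g n) (hh : ∀ n, 0 ≤ h n) (N : ℕ) :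
    ∑ n ∈ Icc 1 N, ∑ j ∈ Ico 1 n, g j * h (n - j) ≤
      (∑ n ∈ Icc 1 N, g n) * ∑ n ∈ Icc 1 N, h n := by
  rw [sum_mul_sum, ← sum_product', sum_sigma']
  calc _ = ∑ p ∈ Icc 1 N ×ˢ Icc 1 N with p.1 + p.2 ≤ N, g p.1 * h p.2 := by
        refine sum_nbij' (fun x => (x.2, x.1 - x.2)) (fun p => ⟨p.1 + p.2, p.1⟩) ?_ ?_ ?_ ?_ ?_ <;>
          simp only [mem_sigma, mem_filter, mem_product, mem_Icc, mem_Ico, Sigma.forall,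
            Prod.forall, Sigma.mk.injEq, Prod.mk.injEq, heq_eq_eq, and_true, true_and,
            implies_true] <;>
          omega
    _ ≤ _ := sum_le_sum_of_subset_of_nonneg (filter_subset _ _)
        fun p _ _ => mul_nonneg (hg _) (hh _)

theorem hasDerivAt_sum_mul_pow_sub_one {𝕜 : Type*} [NontriviallyNormedField 𝕜] (a : ℕ → 𝕜)
    (s : Finset ℕ) (x : 𝕜) :
    HasDerivAt (fun t => ∑ n ∈ s, a n * t ^ (n - 1))
      (∑ n ∈ s, a n * ((n - 1 : ℕ) * x ^ (n - 1 - 1))) x :=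
  HasDerivAt.fun_sum fun n _ => (hasDerivAt_pow (n - 1) x).const_mul (a n)

theorem mul_sub_one_le_of_le_div_mul {K : Type*} [Field K] [LinearOrder K]
    [IsStrictOrderedRing K] {C x S : K} (hC : 0 ≤ C) (hS : 0 ≤ S) {n : ℕ}
    (hx : x ≤ C / n * S) : x * (n - 1 : ℕ) ≤ C * S := by
  rcases Nat.eq_zero_or_pos n with rfl | hn
  · simp [mul_nonneg hC hS]
  calc x * (n - 1 : ℕ) ≤ C / n * S * (n - 1 : ℕ) := by gcongr
    _ = C * S * ((n - 1 : ℕ) / n) := by ring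
    _ ≤ C * S := by
        refine mul_le_of_le_one_right (mul_nonneg hC hS) ?_
        rw [div_le_one (by positivity)]
        exact_mod_cast Nat.sub_le n 1

section Hopf

variable {g d : ℕ → ℝ} {C τ : ℝ}

theorem mul_sub_one_mul_pow_le_mul_sum (hC : 0 ≤ C) (hτ : 0 ≤ τ) (hg : ∀ n, 0 ≤ g n)
    (hd : ∀ n, 0 ≤ d n)
    (hrec : ∀ n, 2 ≤ n → g n ≤ C / n * ∑ j ∈ Ico 1 n, g j * d (n - j)) {n : ℕ} (hn : 1 ≤ n) :
    g n * ((n - 1 : ℕ) * τ ^ (n - 1 - 1)) ≤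
      C * ∑ j ∈ Ico 1 n, g j * τ ^ (j - 1) * (d (n - j) * τ ^ (n - j - 1)) := by
  obtain rfl | hn := hn.eq_or_lt
  · simp
  have hS : 0 ≤ ∑ j ∈ Ico 1 n, g j * d (n - j) :=
    sum_nonneg fun j _ => mul_nonneg (hg j) (hd _)
  have hpow : ∑ j ∈ Ico 1 n, g j * τ ^ (j - 1) * (d (n - j) * τ ^ (n - j - 1)) =
      (∑ j ∈ Ico 1 n, g j * d (n - j)) * τ ^ (n - 1 - 1) := by
    rw [sum_mul]
    refine sum_congr rfl fun j hj => ?_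
    rw [show n - 1 - 1 = (j - 1) + (n - j - 1) by grind, pow_add]
    ring
  calc g n * ((n - 1 : ℕ) * τ ^ (n - 1 - 1)) = g n * (n - 1 : ℕ) * τ ^ (n - 1 - 1) := by ring
    _ ≤ C * (∑ j ∈ Ico 1 n, g j * d (n - j)) * τ ^ (n - 1 - 1) :=
        mul_le_mul_of_nonneg_right (mul_sub_one_le_of_le_div_mul hC hS (hrec n hn)) (by positivity)
    _ = _ := by rw [hpow, mul_assoc]

theorem deriv_sum_mul_pow_sub_one_le (hC : 0 ≤ C) (hτ : 0 ≤ τ) (hg : ∀ n, 0 ≤ g n)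
    (hd : ∀ n, 0 ≤ d n)
    (hrec : ∀ n, 2 ≤ n → g n ≤ C / n * ∑ j ∈ Ico 1 n, g j * d (n - j)) (N : ℕ) :
    deriv (fun s => ∑ n ∈ Icc 1 N, g n * s ^ (n - 1)) τ ≤
      C * (∑ n ∈ Icc 1 N, g n * τ ^ (n - 1)) * ∑ n ∈ Icc 1 N, d n * τ ^ (n - 1) := by
  rw [(hasDerivAt_sum_mul_pow_sub_one g _ τ).deriv, mul_assoc]
  calc _ ≤ ∑ n ∈ Icc 1 N, C * ∑ j ∈ Ico 1 n, g j * τ ^ (j - 1) * (d (n - j) * τ ^ (n - j - 1)) :=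
        sum_le_sum fun n hn =>
          mul_sub_one_mul_pow_le_mul_sum hC hτ hg hd hrec (mem_Icc.1 hn).1
    _ ≤ _ := by
        rw [← mul_sum]
        exact mul_le_mul_of_nonneg_left (sum_Icc_sum_Ico_mul_sub_le_mul_sum
          (g := fun n => g n * τ ^ (n - 1)) (h := fun n => d n * τ ^ (n - 1))
          (fun n => mul_nonneg (hg n) (pow_nonneg hτ _))
          (fun n => mul_nonneg (hd n) (pow_nonneg hτ _)) N) hC

end Hopf

theorem two_dim_hopf_inequality_partial_sums_general (C₀ r : ℝ) (hC₀ : 0 < C₀) :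
    ∃ C : ℝ, 0 < C ∧
      ∀ (G D₁ D₂ : ℕ → ℝ → ℝ → ℝ),
      (∀ (n : ℕ) (z₁ z₂ : ℝ), HasDerivAt (fun w => G n w z₂) (D₁ n z₁ z₂) z₁) →
      (∀ (n : ℕ) (z₁ z₂ : ℝ), HasDerivAt (fun w => G n z₁ w) (D₂ n z₁ z₂) z₂) →
      (∀ n, ∀ z₁ ∈ Set.Icc (0:ℝ) r, ∀ z₂ ∈ Set.Icc (0:ℝ) r,
        0 ≤ G n z₁ z₂ ∧ 0 ≤ D₁ n z₁ z₂ ∧ 0 ≤ D₂ n z₁ z₂) →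
      (∀ n : ℕ, 2 ≤ n → ∀ z₁ ∈ Set.Icc (0:ℝ) r, ∀ z₂ ∈ Set.Icc (0:ℝ) r,
        G n z₁ z₂ ≤ (C₀ / n) * ∑ j ∈ Finset.Ico 1 n,
          (G j z₁ z₂ * D₁ (n - j) z₁ z₂ + G j z₁ z₂ * D₂ (n - j) z₁ z₂)) →
      ∀ N, 1 ≤ N → ∀ τ : ℝ, 0 ≤ τ → ∀ z₁ ∈ Set.Icc (0:ℝ) r, ∀ z₂ ∈ Set.Icc (0:ℝ) r,
        deriv (fun s => ∑ n ∈ Finset.Icc 1 N, G n z₁ z₂ * s ^ (n - 1)) τ ≤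
          C * (∑ n ∈ Finset.Icc 1 N, G n z₁ z₂ * τ ^ (n - 1)) *
              (∑ n ∈ Finset.Icc 1 N, D₁ n z₁ z₂ * τ ^ (n - 1)) +
          C * (∑ n ∈ Finset.Icc 1 N, G n z₁ z₂ * τ ^ (n - 1)) *
              (∑ n ∈ Finset.Icc 1 N, D₂ n z₁ z₂ * τ ^ (n - 1)) := by
  refine ⟨C₀, hC₀, fun G D₁ D₂ _ _ hnonneg hrec N _ τ hτ z₁ hz₁ z₂ hz₂ => ?_⟩
  have hopf := deriv_sum_mul_pow_sub_one_le (d := fun n => D₁ n z₁ z₂ + D₂ n z₁ z₂) hC₀.le hτ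
    (fun n => (hnonneg n z₁ hz₁ z₂ hz₂).1)
    (fun n => add_nonneg (hnonneg n z₁ hz₁ z₂ hz₂).2.1 (hnonneg n z₁ hz₁ z₂ hz₂).2.2)
    (fun n hn => by simpa only [mul_add] using hrec n hn z₁ hz₁ z₂ hz₂) N
  simpa only [add_mul, sum_add_distrib, mul_add] using hopf

/-- Two-dimensional Hopf differential inequality for the partial sums of generator
functions. If nonnegative functions `G^n(z₁,z₂)` (with nonnegative partial derivatives
`D₁ = ∂_{z₁}G^n`, `D₂ = ∂_{z₂}G^n`) satisfy
`G^n ≤ (C₀/n) Σ_{j=1}^{n-1} (G^j ∂_{z₁}G^{n-j} + G^j ∂_{z₂}G^{n-j})` for `n ≥ 2`,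
then the partial sums `G_N(τ,z₁,z₂) = Σ_{n=1}^N G^n τ^{n-1}` satisfy
`∂_τ G_N ≤ C G_N ∂_{z₁}G_N + C G_N ∂_{z₂}G_N` for all `τ ≥ 0`, `z₁, z₂` in the domain
and all `N ≥ 1`, with `C` depending only on `C₀`. -/
theorem two_dim_hopf_inequality_partial_sums (C₀ r : ℝ) (hC₀ : 0 < C₀) (hr : 0 < r) :
    ∃ C : ℝ, 0 < C ∧
      ∀ (G D₁ D₂ : ℕ → ℝ → ℝ → ℝ),
      (∀ (n : ℕ) (z₁ z₂ : ℝ), HasDerivAt (fun w => G n w z₂) (D₁ n z₁ z₂) z₁) →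
      (∀ (n : ℕ) (z₁ z₂ : ℝ), HasDerivAt (fun w => G n z₁ w) (D₂ n z₁ z₂) z₂) →
      (∀ n, ∀ z₁ ∈ Set.Icc (0:ℝ) r, ∀ z₂ ∈ Set.Icc (0:ℝ) r,
        0 ≤ G n z₁ z₂ ∧ 0 ≤ D₁ n z₁ z₂ ∧ 0 ≤ D₂ n z₁ z₂) →
      (∀ n : ℕ, 2 ≤ n → ∀ z₁ ∈ Set.Icc (0:ℝ) r, ∀ z₂ ∈ Set.Icc (0:ℝ) r,
        G n z₁ z₂ ≤ (C₀ / n) * ∑ j ∈ Finset.Ico 1 n,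
          (G j z₁ z₂ * D₁ (n - j) z₁ z₂ + G j z₁ z₂ * D₂ (n - j) z₁ z₂)) →
      ∀ N, 1 ≤ N → ∀ τ : ℝ, 0 ≤ τ → ∀ z₁ ∈ Set.Icc (0:ℝ) r, ∀ z₂ ∈ Set.Icc (0:ℝ) r,
        deriv (fun s => ∑ n ∈ Finset.Icc 1 N, G n z₁ z₂ * s ^ (n - 1)) τ ≤
          C * (∑ n ∈ Finset.Icc 1 N, G n z₁ z₂ * τ ^ (n - 1)) *
              (∑ n ∈ Finset.Icc 1 N, D₁ n z₁ z₂ * τ ^ (n - 1)) +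
          C * (∑ n ∈ Finset.Icc 1 N, G n z₁ z₂ * τ ^ (n - 1)) *
              (∑ n ∈ Finset.Icc 1 N, D₂ n z₁ z₂ * τ ^ (n - 1)) :=
  two_dim_hopf_inequality_partial_sums_general C₀ r hC₀
end
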